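/- If r ≥ 4, n ≥ r+1, and n - r is even, then σ(K_{r+1} - U, n) ≥ (r-1)(2n-r) - 3(n-r), where U is a graph on k vertices (7 ≤ k ≤ r+1) containing no 4-cycle and no Z_4 = K_4 - P_2. -/

import Mathlib

/-!
The sequence `π = ((n-1)^(r-3), r-1, (r-2)^(n-r+2))` is graphic when `n - r` is even (the first
`r - 3` vertices universal, a path on three of the others and a perfect matching on the rest), and
its sum is `(r-1)(2n-r) - 3(n-r) - 2`. No realization of `π` contains `K_{r+1} - U`: the vertices
of degree `n - 1` are universal, so at least four vertices of a copy lie among the low-degree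
vertices, where each has at most one neighbour outside the universal ones, except the vertex of
degree `r - 1`, which has two. On these four or more vertices `U` therefore misses at most one
edge at each vertex and two at one vertex `s`. If two vertices other than `s` are non-adjacent in
`U`, each of them is adjacent to all the others, which gives a `C₄`; otherwise the vertices other
than `s` form a clique, and one more edge at one of them gives a `Z₄`.
-/

open SimpleGraph Finset

noncomputable def deg {n : ℕ} (G : SimpleGraph (Fin n)) (v : Fin n) : ℕ :=
  Set.ncard {w | G.Adj v w}

def Contains {α β : Type*} (G : SimpleGraph α) (H : SimpleGraph β) : Prop :=
  ∃ f : β ↪ α, ∀ ⦃u v : β⦄, H.Adj u v → G.Adj (f u) (f v)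

def IsGraphic {n : ℕ} (d : Fin n → ℕ) : Prop :=
  ∃ G : SimpleGraph (Fin n), ∀ i, deg G i = d i

def PotentiallyGraphic {n : ℕ} {β : Type*} (H : SimpleGraph β) (d : Fin n → ℕ) : Prop :=
  ∃ G : SimpleGraph (Fin n), (∀ i, deg G i = d i) ∧ Contains G H

noncomputable def sigmaPot {β : Type*} (H : SimpleGraph β) (n : ℕ) : ℕ :=
  sInf {l : ℕ | Even l ∧ ∀ d : Fin n → ℕ, Antitone d → IsGraphic d →
    l ≤ ∑ i, d i → PotentiallyGraphic H d}

def C4graph : SimpleGraph (Fin 4) :=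
  SimpleGraph.fromEdgeSet {s(0,1), s(1,2), s(2,3), s(0,3)}

def Z4graph : SimpleGraph (Fin 4) :=
  SimpleGraph.fromEdgeSet {s(0,2), s(0,3), s(1,3), s(2,3)}

def K3UP3 : SimpleGraph (Fin 7) :=
  SimpleGraph.fromEdgeSet {s(0,1), s(0,2), s(1,2), s(3,4), s(4,5), s(5,6)}

open Classical

lemma deg_eq_degree {n : ℕ} (G : SimpleGraph (Fin n)) (v : Fin n) : deg G v = G.degree v := by
  rw [deg, ← card_neighborSet_eq_degree, ← Nat.card_eq_fintype_card, Nat.card_coe_set_eq]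
  rfl

lemma deg_eq_card_of_adj_iff {n : ℕ} {G : SimpleGraph (Fin n)} {v : Fin n} {s : Finset ℕ}
    (hs : ∀ i ∈ s, i < n) (h : ∀ w : Fin n, G.Adj v w ↔ w.val ∈ s) : deg G v = #s := by
  have : {w | G.Adj v w} = Fin.val ⁻¹' ↑s := Set.ext h
  rw [deg, this, Set.ncard_preimage_of_injective_subset_range Fin.val_injective,
    Set.ncard_coe_finset]
  exact fun i hi => ⟨⟨i, hs i hi⟩, rfl⟩

lemma IsGraphic.even_sum {n : ℕ} {d : Fin n → ℕ} (hd : IsGraphic d) : Even (∑ i, d i) := by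
  obtain ⟨G, hG⟩ := hd
  simp only [← hG, deg_eq_degree, sum_degrees_eq_twice_card_edges, even_two_mul]

lemma IsGraphic.sum_le {n : ℕ} {d : Fin n → ℕ} (hd : IsGraphic d) : ∑ i, d i ≤ n * n := by
  obtain ⟨G, hG⟩ := hd
  calc ∑ i, d i ≤ ∑ _i : Fin n, n := by
        gcongr with i
        simpa [← hG, deg_eq_degree] using (G.degree_lt_card_verts i).le
    _ = n * n := by simp

lemma add_two_le_sigmaPot {β : Type*} (H : SimpleGraph β) {n : ℕ} {d : Fin n → ℕ}
    (hanti : Antitone d) (hd : IsGraphic d) (hH : ¬ PotentiallyGraphic H d) :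
    ∑ i, d i + 2 ≤ sigmaPot H n := by
  apply le_csInf
  · refine ⟨2 * (n * n + 1), even_two_mul _, fun e _ he hle => absurd hle ?_⟩
    have := he.sum_le
    omega
  · rintro l ⟨⟨a, rfl⟩, hl⟩
    by_contra! hlt
    obtain ⟨b, hb⟩ := hd.even_sum
    exact hH (hl d hanti hd (by omega))

def extremalSeq (r n : ℕ) (i : Fin n) : ℕ :=
  if i.val < r - 3 then n - 1 else if i.val = r - 3 then r - 1 else r - 2

-- The path is `r-2, r-3, r-1`; the matching pairs `r + 2j` with `r + 2j + 1`.
def extremalGraph (r n : ℕ) : SimpleGraph (Fin n) :=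
  SimpleGraph.fromRel fun u v => u.val < r - 3 ∨ (u.val = r - 3 ∧ r - 3 < v.val ∧ v.val < r) ∨
    (r ≤ u.val ∧ v.val = u.val + 1 ∧ Even (u.val - r))

lemma antitone_extremalSeq {r n : ℕ} (h : r ≤ n) : Antitone (extremalSeq r n) := by
  intro i j hij
  have : i.val ≤ j.val := hij
  simp only [extremalSeq]
  split_ifs <;> omega

lemma sum_extremalSeq {r n : ℕ} (hr : 3 ≤ r) (hn : r ≤ n) :
    ∑ i, extremalSeq r n i = (r - 3) * (n - 1) + (r - 1) + (n - r + 2) * (r - 2) := by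
  simp only [extremalSeq]
  rw [Fin.sum_univ_eq_sum_range
    (fun i => if i < r - 3 then n - 1 else if i = r - 3 then r - 1 else r - 2),
    show range n = range (r - 3 + (1 + (n - r + 2))) by congr 1; omega, sum_range_add,
    sum_range_add]
  simp +contextual [sum_ite_of_true, mem_range]
  ring

lemma deg_extremalGraph {r n : ℕ} (hr : 3 ≤ r) (hn : r ≤ n) (hpar : Even (n - r)) (v : Fin n) :
    deg (extremalGraph r n) v = extremalSeq r n v := by
  obtain ⟨v, hv⟩ := v
  obtain ⟨c, hc⟩ := hpar
  have hadj (w : Fin n) : (extremalGraph r n).Adj ⟨v, hv⟩ w ↔ v ≠ w.val ∧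
      (v < r - 3 ∨ w.val < r - 3 ∨ (v = r - 3 ∧ r - 3 < w.val ∧ w.val < r) ∨
        (w.val = r - 3 ∧ r - 3 < v ∧ v < r) ∨ (r ≤ v ∧ w.val = v + 1 ∧ (v - r) % 2 = 0) ∨
        (r ≤ w.val ∧ v = w.val + 1 ∧ (w.val - r) % 2 = 0)) := by
    simp only [extremalGraph, fromRel_adj, ne_eq, Fin.ext_iff, Nat.even_iff]
    tauto
  simp only [extremalSeq]
  split_ifs with h1 h2
  · rw [deg_eq_card_of_adj_iff (s := (range n).erase v)]
    · simp [hv]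
    · simp
    · intro w
      simp only [hadj, ne_eq, mem_erase, mem_range, Fin.is_lt, and_true]
      omega
  · rw [deg_eq_card_of_adj_iff (s := insert (r - 2) (insert (r - 1) (range (r - 3))))]
    · rw [card_insert_of_notMem (by simp only [mem_insert, mem_range]; omega),
        card_insert_of_notMem (by simp only [mem_range]; omega), card_range]
      omega
    · intro i
      simp only [mem_insert, mem_range]
      omega
    · intro w
      simp only [hadj, mem_insert, mem_range]
      omega
  · obtain ⟨p, hp, hpn, hvp⟩ : ∃ p, r - 3 ≤ p ∧ p < n ∧
        ∀ w : Fin n, (extremalGraph r n).Adj ⟨v, hv⟩ w ↔ w.val = p ∨ w.val < r - 3 := by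
      by_cases hvr : v < r
      · exact ⟨r - 3, le_rfl, by omega, fun w => by rw [hadj]; omega⟩
      by_cases hvpar : (v - r) % 2 = 0
      · exact ⟨v + 1, by omega, by omega, fun w => by rw [hadj]; omega⟩
      · exact ⟨v - 1, by omega, by omega, fun w => by rw [hadj]; omega⟩
    rw [deg_eq_card_of_adj_iff (s := insert p (range (r - 3)))]
    · rw [card_insert_of_notMem (by simp only [mem_range]; omega), card_range]
      omega
    · intro i
      simp only [mem_insert, mem_range]
      omega
    · simpa using hvp

lemma isGraphic_extremalSeq {r n : ℕ} (hr : 3 ≤ r) (hn : r ≤ n) (hpar : Even (n - r)) :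
    IsGraphic (extremalSeq r n) :=
  ⟨extremalGraph r n, deg_extremalGraph hr hn hpar⟩

lemma injective_vec_four {α : Type*} {a b c d : α} (hab : a ≠ b) (hac : a ≠ c) (had : a ≠ d)
    (hbc : b ≠ c) (hbd : b ≠ d) (hcd : c ≠ d) : Function.Injective ![a, b, c, d] := by
  intro i j hij
  fin_cases i <;> fin_cases j <;> simp_all [eq_comm]

lemma contains_C4graph {α : Type*} {V : SimpleGraph α} {a b c d : α} (hab : a ≠ b) (hac : a ≠ c)
    (had : a ≠ d) (hbc : b ≠ c) (hbd : b ≠ d) (hcd : c ≠ d)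
    (h₁ : V.Adj a b) (h₂ : V.Adj b c) (h₃ : V.Adj c d) (h₄ : V.Adj a d) :
    Contains V C4graph := by
  refine ⟨⟨![a, b, c, d], injective_vec_four hab hac had hbc hbd hcd⟩, fun i j hij => ?_⟩
  fin_cases i <;> fin_cases j <;> simp [C4graph] at hij ⊢ <;> simp [V.adj_comm, *]

lemma contains_Z4graph {α : Type*} {V : SimpleGraph α} {a b c d : α} (hab : a ≠ b) (hac : a ≠ c)
    (had : a ≠ d) (hbc : b ≠ c) (hbd : b ≠ d) (hcd : c ≠ d)
    (h₁ : V.Adj a c) (h₂ : V.Adj a d) (h₃ : V.Adj b d) (h₄ : V.Adj c d) :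
    Contains V Z4graph := by
  refine ⟨⟨![a, b, c, d], injective_vec_four hab hac had hbc hbd hcd⟩, fun i j hij => ?_⟩
  fin_cases i <;> fin_cases j <;> simp [Z4graph] at hij ⊢ <;> simp [V.adj_comm, *]

lemma Contains.of_map {α β γ : Type*} {U : SimpleGraph α} {X : SimpleGraph γ} (f : α ↪ β)
    (hX : ∀ i, ∃ j, X.Adj i j) (h : Contains (U.map f) X) : Contains U X := by
  obtain ⟨e, he⟩ := h
  have hrange (i : γ) : ∃ a, f a = e i := by
    obtain ⟨j, hij⟩ := hX i
    obtain ⟨a, -, -, ha, -⟩ := (map_adj f U _ _).mp (he hij)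
    exact ⟨a, ha⟩
  choose p hp using hrange
  refine ⟨⟨p, fun i j hij => e.injective (by rw [← hp, ← hp, hij])⟩, fun i j hij => ?_⟩
  have := he hij
  rw [← hp, ← hp] at this
  exact map_adj_apply.mp this

lemma C4graph_exists_adj (i : Fin 4) : ∃ j, C4graph.Adj i j :=
  ⟨i + 1, by fin_cases i <;> simp [C4graph]⟩

lemma Z4graph_exists_adj (i : Fin 4) : ∃ j, Z4graph.Adj i j :=
  ⟨i + 2, by fin_cases i <;> simp [Z4graph]⟩

lemma exists_pair_ne_of_four_le_card {α : Type*} [DecidableEq α] {A : Finset α} (hA : 4 ≤ #A)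
    (a b : α) :
    ∃ x ∈ A, ∃ y ∈ A, x ≠ y ∧ x ≠ a ∧ x ≠ b ∧ y ≠ a ∧ y ≠ b := by
  have h₁ := pred_card_le_card_erase (s := A) (a := a)
  have h₂ := pred_card_le_card_erase (s := A.erase a) (a := b)
  obtain ⟨x, hx, y, hy, hxy⟩ := one_lt_card.mp (show 1 < #((A.erase a).erase b) by omega)
  simp only [mem_erase] at hx hy
  exact ⟨x, hx.2.2, y, hy.2.2, hxy, hx.2.1, hx.1, hy.2.1, hy.1⟩

lemma contains_C4graph_or_Z4graph {α : Type*} [DecidableEq α] (V : SimpleGraph α)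
    [DecidableRel V.Adj] {A : Finset α} (hA : 4 ≤ #A) (s : α)
    (h : ∀ a ∈ A, #{b ∈ A | Vᶜ.Adj a b} ≤ if a = s then 2 else 1) :
    Contains V C4graph ∨ Contains V Z4graph := by
  by_cases hcase : ∃ a ∈ A, ∃ b ∈ A, a ≠ s ∧ b ≠ s ∧ Vᶜ.Adj a b
  · left
    obtain ⟨a, ha, b, hb, has, hbs, hab⟩ := hcase
    have hunique {x y : α} (hx : x ∈ A) (hxs : x ≠ s) (hy : y ∈ A) (hxy : Vᶜ.Adj x y) {c : α}
        (hc : c ∈ A) (hcx : x ≠ c) (hcy : c ≠ y) : V.Adj x c := by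
      by_contra hxc
      have hx1 := h x hx
      rw [if_neg hxs] at hx1
      exact hcy (card_le_one.mp hx1 c (by simp [hc, hcx, hxc]) y (mem_filter.mpr ⟨hy, hxy⟩))
    obtain ⟨x, hx, y, hy, hxy, hxa, hxb, hya, hyb⟩ := exists_pair_ne_of_four_le_card hA a b
    exact contains_C4graph hxa.symm hab.ne hya.symm hxb hxy hyb.symm
      (hunique ha has hb hab hx hxa.symm hxb) (hunique hb hbs ha hab.symm hx hxb.symm hxa).symm
      (hunique hb hbs ha hab.symm hy hyb.symm hya) (hunique ha has hb hab hy hya.symm hyb)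
  · right
    push Not at hcase
    have hclique {x y : α} (hx : x ∈ A) (hy : y ∈ A) (hxs : x ≠ s) (hys : y ≠ s) (hxy : x ≠ y) :
        V.Adj x y := by
      by_contra hV
      exact hcase x hx y hy hxs hys ((compl_adj V x y).mpr ⟨hxy, hV⟩)
    obtain ⟨z, hz, t, ht, hzt, hts, hzs⟩ :
        ∃ z ∈ A, ∃ t ∈ A, V.Adj z t ∧ t ≠ s ∧ ∀ x ∈ A, x ≠ z → x ≠ s := by
      by_cases hsA : s ∈ A
      · have hlt : #{b ∈ A | Vᶜ.Adj s b} < #(A.erase s) := by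
          have := h s hsA
          rw [if_pos rfl] at this
          rw [card_erase_of_mem hsA]
          omega
        obtain ⟨t, ht, htn⟩ := exists_mem_notMem_of_card_lt_card hlt
        obtain ⟨hts, htA⟩ := mem_erase.mp ht
        have hst : V.Adj s t := by
          by_contra hV
          exact htn (by simp [htA, compl_adj, hts.symm, hV])
        exact ⟨s, hsA, t, htA, hst, hts, fun x _ hx => hx⟩
      · obtain ⟨z, hz, t, ht, hzt, -⟩ := exists_pair_ne_of_four_le_card hA s s
        have hnot {x : α} (hx : x ∈ A) : x ≠ s := ne_of_mem_of_not_mem hx hsA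
        exact ⟨z, hz, t, ht, hclique hz ht (hnot hz) (hnot ht) hzt, hnot ht, fun x hx _ => hnot hx⟩
    obtain ⟨u, hu, w, hw, huw, huz, hut, hwz, hwt⟩ := exists_pair_ne_of_four_le_card hA z t
    exact contains_Z4graph huz huw hut (fun h => hwz h.symm) (fun h => hzt.ne h) hwt
      (hclique hu hw (hzs u hu huz) (hzs w hw hwz) huw)
      (hclique hu ht (hzs u hu huz) hts hut) hzt
      (hclique hw ht (hzs w hw hwz) hts hwt)

lemma isUniversal_of_deg_eq_extremalSeq {r n : ℕ} {G : SimpleGraph (Fin n)}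
    (hG : ∀ i, deg G i = extremalSeq r n i) {w : Fin n} (hw : w.val < r - 3) : G.IsUniversal w := by
  rw [← degree_eq_card_sub_one, ← deg_eq_degree, hG, extremalSeq, if_pos hw, Fintype.card_fin]

lemma card_adj_tail_add_le {r n : ℕ} {G : SimpleGraph (Fin n)}
    (hG : ∀ i, deg G i = extremalSeq r n i) {v : Fin n} (hv : r - 3 ≤ v.val) :
    #{w | G.Adj v w ∧ r - 3 ≤ w.val} + (r - 3) ≤ extremalSeq r n v := by
  set N : Finset (Fin n) := {w | G.Adj v w}
  have hN : #N = extremalSeq r n v := by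
    rw [← hG, deg_eq_degree, ← card_neighborFinset_eq_degree, neighborFinset_eq_filter]
  have htail : {w ∈ N | r - 3 ≤ w.val} = ({w | G.Adj v w ∧ r - 3 ≤ w.val} : Finset (Fin n)) :=
    filter_filter _ _ _
  have hhead : {w ∈ N | ¬ r - 3 ≤ w.val} = ({w | w.val < r - 3} : Finset (Fin n)) := by
    ext w
    simp only [N, mem_filter, mem_univ, true_and, not_le, and_iff_right_iff_imp]
    exact fun hw =>
      (isUniversal_of_deg_eq_extremalSeq hG hw (show w ≠ v from Fin.ne_of_val_ne (by omega))).symm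
  rw [← hN, ← card_filter_add_card_filter_not (s := N) (fun w => r - 3 ≤ w.val), htail, hhead,
    Fin.card_filter_val_lt]
  omega

lemma not_potentiallyGraphic_extremalSeq {r n : ℕ} (hr : 3 ≤ r) {V : SimpleGraph (Fin (r + 1))}
    (hC4 : ¬ Contains V C4graph) (hZ4 : ¬ Contains V Z4graph) :
    ¬ PotentiallyGraphic Vᶜ (extremalSeq r n) := by
  rintro ⟨G, hG, g, hg⟩
  let A : Finset (Fin (r + 1)) := {u | r - 3 ≤ (g u).val}
  have hA : 4 ≤ #A := by
    have hhead : #{u : Fin (r + 1) | ¬ r - 3 ≤ (g u).val} ≤ r - 3 :=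
      calc _ ≤ #{w : Fin n | w.val < r - 3} := by
            refine card_le_card_of_injOn g (fun u hu => ?_) g.injective.injOn
            simp only [mem_coe, mem_filter, mem_univ, true_and, not_le] at hu ⊢
            omega
        _ ≤ r - 3 := by rw [Fin.card_filter_val_lt]; exact min_le_right _ _
    have hsplit : #A + #{u : Fin (r + 1) | ¬ r - 3 ≤ (g u).val} = r + 1 := by
      rw [card_filter_add_card_filter_not, card_univ, Fintype.card_fin]
    omega
  obtain ⟨s, hs⟩ : ∃ s, ∀ u, (g u).val = r - 3 → u = s := by
    by_cases h : ∃ u, (g u).val = r - 3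
    · obtain ⟨u, hu⟩ := h
      exact ⟨u, fun u' hu' => g.injective (Fin.ext (hu'.trans hu.symm))⟩
    · exact ⟨0, fun u hu => absurd ⟨u, hu⟩ h⟩
  refine (contains_C4graph_or_Z4graph V hA s fun a ha => ?_).elim hC4 hZ4
  have hga : r - 3 ≤ (g a).val := (mem_filter.mp ha).2
  have hinj : #{b ∈ A | Vᶜ.Adj a b} ≤ #{w | G.Adj (g a) w ∧ r - 3 ≤ w.val} :=
    card_le_card_of_injOn g (fun b hb => by simp_all [A]) g.injective.injOn
  have htail := card_adj_tail_add_le hG hga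
  rw [extremalSeq, if_neg (not_lt.mpr hga)] at htail
  by_cases hgs : (g a).val = r - 3
  · rw [if_pos (hs a hgs)]
    rw [if_pos hgs] at htail
    omega
  · rw [if_neg hgs] at htail
    split_ifs <;> omega

theorem stmt_3_general (r n k : ℕ) (hr : 4 ≤ r) (hn : r + 1 ≤ n) (hpar : Even (n - r))
    (U : SimpleGraph (Fin k))
    (hC4 : ¬ Contains U C4graph) (hZ4 : ¬ Contains U Z4graph)
    (f : Fin k ↪ Fin (r + 1)) :
    (r - 1) * (2 * n - r) - 3 * (n - r) ≤
      sigmaPot ((⊤ : SimpleGraph (Fin (r + 1))) \ U.map f) n := by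
  have hbound : (r - 1) * (2 * n - r) - 3 * (n - r) = ∑ i, extremalSeq r n i + 2 := by
    rw [sum_extremalSeq (by omega) (by omega)]
    obtain ⟨q, rfl⟩ : ∃ q, r = q + 3 := ⟨r - 3, by omega⟩
    obtain ⟨t, rfl⟩ : ∃ t, n = q + 3 + t := ⟨n - (q + 3), by omega⟩
    simp [show 2 * (q + 3 + t) - (q + 3) = q + 3 + 2 * t by omega]
    refine Nat.sub_eq_of_eq_add ?_
    ring
  rw [hbound, top_sdiff]
  exact add_two_le_sigmaPot _ (antitone_extremalSeq (by omega))
    (isGraphic_extremalSeq (by omega) (by omega) hpar)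
    (not_potentiallyGraphic_extremalSeq (by omega) (fun h => hC4 (h.of_map f C4graph_exists_adj))
      (fun h => hZ4 (h.of_map f Z4graph_exists_adj)))

/-- Lower bound for `σ(K_{r+1} - U, n)` when `n - r` is even. -/
theorem stmt_3 (r n k : ℕ) (hr : 4 ≤ r) (hn : r + 1 ≤ n) (hpar : Even (n - r))
    (hk7 : 7 ≤ k) (hkr : k ≤ r + 1) (U : SimpleGraph (Fin k))
    (hC4 : ¬ Contains U C4graph) (hZ4 : ¬ Contains U Z4graph)
    (f : Fin k ↪ Fin (r + 1)) :
    (r - 1) * (2 * n - r) - 3 * (n - r) ≤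
      sigmaPot ((⊤ : SimpleGraph (Fin (r + 1))) \ U.map f) n :=
  stmt_3_general r n k hr hn hpar U hC4 hZ4 f
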